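/- For every μ > 0, the number t* := log((sinh μ / μ)(1 - √(1 - μ²/sinh²μ))) satisfies -μ < t* < 0. -/
import Mathlib

open Real

lemma sinh_lt_mul_cosh (x : ℝ) (hx : 0 < x) : Real.sinh x < x * Real.cosh x := by
  have hmono : StrictMonoOn (fun y : ℝ => y * Real.cosh y - Real.sinh y) (Set.Ici 0) := by
    apply strictMonoOn_of_deriv_pos (convex_Ici _)
    · exact ((continuous_id.mul Real.continuous_cosh).sub Real.continuous_sinh).continuousOn
    · intro y hy
      rw [interior_Ici, Set.mem_Ioi] at hy
      have h1 : HasDerivAt (fun y : ℝ => y * Real.cosh y - Real.sinh y)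
          (1 * Real.cosh y + y * Real.sinh y - Real.cosh y) y :=
        ((hasDerivAt_id y).mul (Real.hasDerivAt_cosh y)).sub (Real.hasDerivAt_sinh y)
      rw [h1.deriv]
      have := Real.sinh_pos_iff.2 hy
      nlinarith
  have h := hmono (Set.self_mem_Ici) (Set.mem_Ici.2 hx.le) hx
  simp at h
  linarith

theorem stmt_7 (μ : ℝ) (hμ : 0 < μ) :
    -μ < Real.log ((Real.sinh μ / μ) * (1 - Real.sqrt (1 - μ ^ 2 / Real.sinh μ ^ 2))) ∧
    Real.log ((Real.sinh μ / μ) * (1 - Real.sqrt (1 - μ ^ 2 / Real.sinh μ ^ 2))) < 0 := by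
  set s := Real.sinh μ with hs_def
  have hμs : μ < s := (Real.self_lt_sinh_iff).2 hμ
  have hs0 : 0 < s := hμ.trans hμs
  set r := 1 - μ ^ 2 / s ^ 2 with hr_def
  have hr0 : 0 ≤ r := by
    have : μ ^ 2 / s ^ 2 < 1 := by
      rw [div_lt_one (by positivity)]
      nlinarith
    rw [hr_def]; linarith
  have hr1 : r < 1 := by
    have : 0 < μ ^ 2 / s ^ 2 := by positivity
    simp only [hr_def]; linarith
  have hsq1 : Real.sqrt r < 1 := by
    rw [show (1 : ℝ) = Real.sqrt 1 by simp]
    exact Real.sqrt_lt_sqrt hr0 (by simpa using hr1)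
  have hsq0 : 0 ≤ Real.sqrt r := Real.sqrt_nonneg r
  have hx0 : 0 < (s / μ) * (1 - Real.sqrt r) := by
    apply mul_pos (by positivity); linarith
  constructor
  · -- lower bound
    rw [show -μ = Real.log (Real.exp (-μ)) by rw [Real.log_exp]]
    apply Real.log_lt_log (Real.exp_pos _)
    set E := Real.exp (-μ) with hE_def
    have hE0 : 0 < E := Real.exp_pos _
    have hE1 : E < 1 := Real.exp_lt_one_iff.2 (by linarith)
    -- key inequality: 1 - E^2 < μ * (1 + E^2)
    have hkey : 1 - E ^ 2 < μ * (1 + E ^ 2) := by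
      have h1 := sinh_lt_mul_cosh μ hμ
      have h2 : Real.sinh μ = (Real.exp μ - E) / 2 := by
        rw [Real.sinh_eq, hE_def]
      have h3 : Real.cosh μ = (Real.exp μ + E) / 2 := by
        rw [Real.cosh_eq, hE_def]
      have h4 : Real.exp μ * E = 1 := by
        rw [hE_def, ← Real.exp_add]; simp
      have hexp : 0 < Real.exp μ := Real.exp_pos _
      nlinarith [mul_pos hexp hE0]
    -- s * sqrt r < s - μ * E
    have hsub : 0 < s - μ * E := by nlinarith
    have hsqrtlt : Real.sqrt r < (s - μ * E) / s := by
      rw [Real.sqrt_lt' (by positivity)]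
      have hs2 : (0:ℝ) < s ^ 2 := by positivity
      have key2 : (1 - μ ^ 2 / s ^ 2) * s ^ 2 = s ^ 2 - μ ^ 2 := by field_simp
      rw [div_pow, hr_def, lt_div_iff₀ hs2, key2]
      have h2s : 2 * s = Real.exp μ - E := by
        rw [hs_def, Real.sinh_eq, hE_def]; ring
      have h4 : Real.exp μ * E = 1 := by
        rw [hE_def, ← Real.exp_add]; simp
      nlinarith [mul_lt_mul_of_pos_left hkey hμ]
    have : μ * E < s * (1 - Real.sqrt r) := by
      have := (mul_lt_mul_iff_right₀ hs0).2 hsqrtlt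
      rw [mul_div_cancel₀ _ (ne_of_gt hs0)] at this
      nlinarith
    rw [hE_def] at this ⊢
    rw [div_mul_eq_mul_div, lt_div_iff₀ hμ]
    linarith
  · -- upper bound
    apply Real.log_neg hx0
    -- (s/μ)(1 - sqrt r) < 1  ⟺  s - μ < s * sqrt r
    have hsqrtgt : (s - μ) / s < Real.sqrt r := by
      rw [Real.lt_sqrt (div_nonneg (by linarith) hs0.le)]
      have hs2 : (0:ℝ) < s ^ 2 := by positivity
      have key2 : (1 - μ ^ 2 / s ^ 2) * s ^ 2 = s ^ 2 - μ ^ 2 := by field_simp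
      rw [div_pow, hr_def, div_lt_iff₀ hs2, key2]
      nlinarith
    have : s - μ < s * Real.sqrt r := by
      have := (mul_lt_mul_iff_right₀ hs0).2 hsqrtgt
      rwa [mul_div_cancel₀ _ (ne_of_gt hs0)] at this
    rw [div_mul_eq_mul_div, div_lt_one hμ]
    nlinarith
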